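/- Let F be a homogeneous form of degree d ≥ 1 in n variables over ℂ. The apolar ideal F^⊥ has a minimal generator of degree d + 1 if and only if F = c·ℓ^d for some nonzero scalar c and some linear form ℓ, i.e. if and only if F has Waring rank 1. -/

import Mathlib

/-!
Apolarity setup.  `S = ℂ[x_1,…,x_n]` and its dual ring `T = ℂ[α_1,…,α_n]` are both
realized as `MvPolynomial (Fin n) ℂ`; the apolarity action `Θ ⌟ F` (`contract Θ F`)
lets `α_i` act as the partial differentiation operator `∂/∂x_i`.
-/

open MvPolynomial

noncomputable section Apolarity

/-- Partial derivatives on `ℂ[x_1,…,x_n]` commute. -/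
lemma pderiv_pderiv_comm (n : ℕ) (i j : Fin n) (f : MvPolynomial (Fin n) ℂ) :
    pderiv i (pderiv j f) = pderiv j (pderiv i f) := by
  induction f using MvPolynomial.induction_on with
  | C a => simp
  | add p q hp hq => simp [hp, hq]
  | mul_X p k hp =>
    rcases eq_or_ne i k with rfl | hik
    · rcases eq_or_ne j i with rfl | hjk
      · rfl
      · simp only [pderiv_mul, pderiv_X_self, pderiv_X_of_ne hjk, pderiv_X_of_ne hjk.symm,
          map_add, map_zero, map_one, Derivation.map_one_eq_zero, mul_one, mul_zero,
          add_zero, zero_add, hp]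
    · rcases eq_or_ne j k with rfl | hjk
      · simp only [pderiv_mul, pderiv_X_self, pderiv_X_of_ne hik, pderiv_X_of_ne hik.symm,
          map_add, map_zero, map_one, Derivation.map_one_eq_zero, mul_one, mul_zero,
          add_zero, zero_add, hp]
      · simp only [pderiv_mul, pderiv_X_of_ne hik.symm, pderiv_X_of_ne hjk.symm, map_add,
          map_zero, mul_zero, add_zero, zero_add, hp]

variable (n : ℕ)

/-- The endomorphism `∂/∂x_i` of `S = ℂ[x_1,…,x_n]`. -/
def derOp (i : Fin n) : Module.End ℂ (MvPolynomial (Fin n) ℂ) :=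
  (pderiv i).toLinearMap

lemma derOp_commute (i j : Fin n) : Commute (derOp n i) (derOp n j) :=
  LinearMap.ext fun f => pderiv_pderiv_comm n i j f

/-- The commuting product of the operators `(∂/∂x_i)^(m i)`. -/
def piDiffHom : (Fin n → Multiplicative ℕ) →* Module.End ℂ (MvPolynomial (Fin n) ℂ) :=
  MonoidHom.noncommPiCoprod (fun i : Fin n => powersHom _ (derOp n i))
    (fun i j _ x y => ((derOp_commute n i j).pow_pow x y))

/-- The differential operator `∏ i, (∂/∂x_i)^(m i)` attached to an exponent vector `m`. -/
def diffMonoidHom : Multiplicative (Fin n →₀ ℕ) →* Module.End ℂ (MvPolynomial (Fin n) ℂ) :=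
  (piDiffHom n).comp
    (AddMonoidHom.toMultiplicative
      (Finsupp.coeFnAddHom : (Fin n →₀ ℕ) →+ (Fin n → ℕ)))

/-- The apolarity action of the dual ring `T = ℂ[α_1,…,α_n]` on `S = ℂ[x_1,…,x_n]`, as an
algebra homomorphism to differential operators: `α_i` acts as `∂/∂x_i`. -/
def apolarAlgHom :
    MvPolynomial (Fin n) ℂ →ₐ[ℂ] Module.End ℂ (MvPolynomial (Fin n) ℂ) :=
  AddMonoidAlgebra.lift ℂ _ (Fin n →₀ ℕ) (diffMonoidHom n)

variable {n}

/-- The apolarity action `Θ ⌟ F`: apply to `F` the differential operator obtained from `Θ`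
by substituting `∂/∂x_i` for the `i`-th (dual) variable. -/
def contract (Θ F : MvPolynomial (Fin n) ℂ) : MvPolynomial (Fin n) ℂ :=
  apolarAlgHom n Θ F

lemma apolarAlgHom_X (i : Fin n) : apolarAlgHom n (X i) = derOp n i := by
  classical
  have hX : (X i : MvPolynomial (Fin n) ℂ)
      = AddMonoidAlgebra.single (Finsupp.single i 1) (1 : ℂ) := rfl
  rw [hX]
  rw [show apolarAlgHom n (AddMonoidAlgebra.single (Finsupp.single i 1) (1:ℂ))
      = (1:ℂ) • diffMonoidHom n (Multiplicative.ofAdd (Finsupp.single i 1)) from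
    AddMonoidAlgebra.lift_single _ _ _]
  rw [one_smul]
  rw [diffMonoidHom]
  have harg : (AddMonoidHom.toMultiplicative
        (Finsupp.coeFnAddHom : (Fin n →₀ ℕ) →+ (Fin n → ℕ)))
        (Multiplicative.ofAdd (Finsupp.single i 1))
      = Pi.mulSingle (M := fun _ : Fin n => Multiplicative ℕ) i (Multiplicative.ofAdd 1) := by
    funext j
    rcases eq_or_ne j i with rfl | hj
    · show Multiplicative.ofAdd ((Finsupp.single j 1 : Fin n →₀ ℕ) j)
        = Pi.mulSingle (M := fun _ : Fin n => Multiplicative ℕ) j (Multiplicative.ofAdd 1) j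
      rw [Finsupp.single_eq_same, Pi.mulSingle_eq_same]
    · show Multiplicative.ofAdd ((Finsupp.single i 1 : Fin n →₀ ℕ) j)
        = Pi.mulSingle (M := fun _ : Fin n => Multiplicative ℕ) i (Multiplicative.ofAdd 1) j
      rw [Finsupp.single_eq_of_ne hj, Pi.mulSingle_eq_of_ne hj]
      exact ofAdd_zero
  refine (congrArg (piDiffHom n) harg).trans ?_
  rw [piDiffHom]
  refine (MonoidHom.noncommPiCoprod_mulSingle _ _ _).trans ?_
  rfl

/-- Sanity check: the dual variable `α_i` acts on `F` as `∂F/∂x_i`. -/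
@[simp] lemma contract_X (i : Fin n) (F : MvPolynomial (Fin n) ℂ) :
    contract (X i) F = pderiv i F := by
  rw [contract, apolarAlgHom_X]; rfl

/-- The apolar (annihilator) ideal `F^⊥ = {Θ ∈ T : Θ ⌟ F = 0}` of a polynomial `F`. -/
def apolarIdeal (F : MvPolynomial (Fin n) ℂ) : Ideal (MvPolynomial (Fin n) ℂ) where
  carrier := {Θ | contract Θ F = 0}
  zero_mem' := by simp [contract]
  add_mem' := by
    intro a b ha hb
    simp only [Set.mem_setOf_eq, contract, map_add, LinearMap.add_apply] at *
    rw [ha, hb, add_zero]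
  smul_mem' := by
    intro c x hx
    simp only [Set.mem_setOf_eq, smul_eq_mul, contract, map_mul, Module.End.mul_apply] at *
    rw [hx, map_zero]

@[simp] lemma mem_apolarIdeal {Θ F : MvPolynomial (Fin n) ℂ} :
    Θ ∈ apolarIdeal F ↔ contract Θ F = 0 := Iff.rfl

variable (n)

/-- The irrelevant maximal ideal `m = ⟨α_1,…,α_n⟩` of `T`. -/
def irrIdeal : Ideal (MvPolynomial (Fin n) ℂ) :=
  Ideal.span (Set.range X)

variable {n}

/-- The homogeneous ideal `I` has a minimal generator of degree `k`, i.e. `(I/mI)_k ≠ 0`: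
there is a homogeneous element of `I` of degree `k` not belonging to `m * I`. -/
def HasMinGenOfDegree (I : Ideal (MvPolynomial (Fin n) ℂ)) (k : ℕ) : Prop :=
  ∃ Θ, Θ ∈ I ∧ Θ.IsHomogeneous k ∧ Θ ∉ irrIdeal n * I

/-- The homogeneous ideal `I` has at least `r` minimal generators of degree `k`, i.e.
`dim_ℂ (I/mI)_k ≥ r`: there are `r` homogeneous degree-`k` elements of `I` that are
linearly independent modulo `m * I`. -/
def MinGensAtLeast (I : Ideal (MvPolynomial (Fin n) ℂ)) (k r : ℕ) : Prop :=
  ∃ Θ : Fin r → MvPolynomial (Fin n) ℂ,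
    (∀ i, Θ i ∈ I ∧ (Θ i).IsHomogeneous k) ∧
    ∀ c : Fin r → ℂ, (∑ i, c i • Θ i) ∈ irrIdeal n * I → ∀ i, c i = 0

/-- `F` is an `s`-fold direct sum of degree `d`: `F = F_1 + ⋯ + F_s` where the `F_i` are
nonzero degree-`d` forms in independent subspaces `V_i` of the space of linear forms with
`V = V_1 ⊕ ⋯ ⊕ V_s` (i.e. in disjoint sets of variables, up to linear change of variables;
`F_i ∈ S^d V_i` is expressed as membership in the subalgebra generated by `V_i`). -/
def IsSFoldDirectSum (F : MvPolynomial (Fin n) ℂ) (d s : ℕ) : Prop :=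
  ∃ (V : Fin s → Submodule ℂ (MvPolynomial (Fin n) ℂ))
    (G : Fin s → MvPolynomial (Fin n) ℂ),
    (∀ i, V i ≤ homogeneousSubmodule (Fin n) ℂ 1) ∧
    iSupIndep V ∧
    (⨆ i, V i) = homogeneousSubmodule (Fin n) ℂ 1 ∧
    (∀ i, G i ≠ 0 ∧ (G i).IsHomogeneous d ∧ G i ∈ Algebra.adjoin ℂ (V i : Set _)) ∧
    F = ∑ i, G i

/-- `F` is a direct sum: `F = F₁ + F₂` with `F₁ ∈ S^d V₁`, `F₂ ∈ S^d V₂` nonzero and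
`V = V₁ ⊕ V₂`. -/
def IsDirectSum (F : MvPolynomial (Fin n) ℂ) (d : ℕ) : Prop :=
  IsSFoldDirectSum F d 2

/-- `F` is a limit (as `t → 0`) of `s`-fold direct sums of degree `d`. -/
def IsLimitOfSFoldDirectSums (F : MvPolynomial (Fin n) ℂ) (d s : ℕ) : Prop :=
  ∃ G : ℂ → MvPolynomial (Fin n) ℂ,
    (∀ t : ℂ, t ≠ 0 → IsSFoldDirectSum (G t) d s) ∧
    ∀ m : Fin n →₀ ℕ,
      Filter.Tendsto (fun t => MvPolynomial.coeff m (G t))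
        (nhdsWithin (0 : ℂ) {(0 : ℂ)}ᶜ) (nhds (MvPolynomial.coeff m F))

/-- `F` is a limit of direct sums. -/
def IsLimitOfDirectSums (F : MvPolynomial (Fin n) ℂ) (d : ℕ) : Prop :=
  IsLimitOfSFoldDirectSums F d 2

/-- `F` is concise: `(F^⊥)_1 = 0`, i.e. `F` cannot be written using fewer variables. -/
def Concise (F : MvPolynomial (Fin n) ℂ) : Prop :=
  ∀ Θ : MvPolynomial (Fin n) ℂ, Θ.IsHomogeneous 1 → contract Θ F = 0 → Θ = 0

end Apolarity

/-!
Every form of degree `d + 1` annihilates `F`, and in each degree the apolar pairing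
`⟨Θ, G⟩ = (Θ ⌟ G)(0)` is perfect. In degree `d + 1` the ideal `m F^⊥` is spanned by the
products `α_i h` with `h ∈ (F^⊥)_d`, and `⟨α_i h, G⟩ = ⟨h, ∂G/∂x_i⟩`; so its orthogonal consists
of the forms `G` of degree `d + 1` all of whose partial derivatives are multiples of `F`, and
`F^⊥` has a minimal generator of degree `d + 1` iff such a `G ≠ 0` exists.
If `∂G/∂x_i = a_i F` for all `i`, the gradient of `G` is everywhere parallel to `a`, and an
induction on the degree using Euler's identity gives `G = c ℓ^(d+1)` with `ℓ = ∑ a_i x_i`,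
hence `F = c' ℓ^d`. Conversely, for `F = c ℓ^d` the form `G = ℓ^(d+1)` does the job.
-/

open scoped Nat

theorem Finsupp.induction_add_single_one {ι : Type*} {motive : (ι →₀ ℕ) → Prop}
    (zero : motive 0) (add_single : ∀ e i, motive e → motive (e + single i 1))
    (e : ι →₀ ℕ) : motive e := by
  induction e using Finsupp.induction with
  | zero => exact zero
  | single_add i b f _ hb hf =>
    clear hb
    induction b with
    | zero => simpa using hf
    | succ b ih =>
      rw [Finsupp.single_add, add_right_comm]
      exact add_single _ i ih

lemma prod_factorial_add_single {ι R : Type*} [Fintype ι] [DecidableEq ι]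
    [CommSemiring R] (e : ι →₀ ℕ) (i : ι) :
    ∏ j, (((e + Finsupp.single i 1 : ι →₀ ℕ) j)! : R) = (∏ j, ((e j)! : R)) * (e i + 1) := by
  rw [← Finset.prod_erase_mul _ _ (Finset.mem_univ i),
    ← Finset.prod_erase_mul _ _ (Finset.mem_univ i), Finset.prod_congr rfl fun j hj => by
      rw [Finsupp.add_apply, Finsupp.single_eq_of_ne (Finset.ne_of_mem_erase hj), add_zero]]
  simp [Nat.factorial_succ, mul_comm, mul_assoc]

lemma prod_factorial_ne_zero {ι R : Type*} [Fintype ι] [CommSemiring R] [Nontrivial R]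
    [NoZeroDivisors R] [CharZero R] (e : ι →₀ ℕ) : ∏ i, ((e i)! : R) ≠ 0 :=
  Finset.prod_ne_zero_iff.2 fun _ _ => Nat.cast_ne_zero.2 (Nat.factorial_ne_zero _)

lemma MvPolynomial.IsHomogeneous.eq_C_coeff_zero {σ R : Type*} [CommSemiring R]
    {p : MvPolynomial σ R} (hp : p.IsHomogeneous 0) : p = C (coeff 0 p) :=
  totalDegree_eq_zero_iff_eq_C.1 ((totalDegree_zero_iff_isHomogeneous σ).2 hp)

instance MvPolynomial.finite_homogeneousSubmodule {σ R : Type*} [Finite σ] [CommSemiring R]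
    (k : ℕ) : Module.Finite R (homogeneousSubmodule σ R k) :=
  Module.Finite.iff_fg.2 (homogeneousSubmodule_fg _ _ k)

noncomputable section ApolarPairing

variable {n : ℕ}

lemma mul_contract (Θ Ψ F : MvPolynomial (Fin n) ℂ) :
    contract (Θ * Ψ) F = contract Θ (contract Ψ F) := by
  simp [contract]

lemma mul_X_contract (Θ F : MvPolynomial (Fin n) ℂ) (i : Fin n) :
    contract (Θ * X i) F = contract Θ (pderiv i F) := by
  rw [mul_contract, contract_X]

@[simp] lemma one_contract (F : MvPolynomial (Fin n) ℂ) : contract 1 F = F := by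
  simp [contract]

@[simp] lemma contract_smul (a : ℂ) (Θ F : MvPolynomial (Fin n) ℂ) :
    contract Θ (a • F) = a • contract Θ F := map_smul _ _ _

variable (n) in
def apolarPairing : MvPolynomial (Fin n) ℂ →ₗ[ℂ] MvPolynomial (Fin n) ℂ →ₗ[ℂ] ℂ :=
  (apolarAlgHom n).toLinearMap.compr₂ (lcoeff ℂ 0)

lemma apolarPairing_apply (Θ F : MvPolynomial (Fin n) ℂ) :
    apolarPairing n Θ F = coeff 0 (contract Θ F) := rfl

lemma apolarPairing_monomial (e : Fin n →₀ ℕ) (F : MvPolynomial (Fin n) ℂ) :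
    apolarPairing n (monomial e 1) F = (∏ i, ((e i)! : ℂ)) * coeff e F := by
  induction e using Finsupp.induction_add_single_one generalizing F with
  | zero => simp [apolarPairing_apply]
  | add_single e _ ih =>
    rw [← mul_one (1 : ℂ), ← monomial_mul, ← X, apolarPairing_apply, mul_X_contract,
      ← apolarPairing_apply, ih, coeff_pderiv, prod_factorial_add_single]
    ring

lemma apolarPairing_eq_zero_of_ne {Θ F : MvPolynomial (Fin n) ℂ} {k m : ℕ}
    (hΘ : Θ.IsHomogeneous k) (hF : F.IsHomogeneous m) (hkm : k ≠ m) :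
    apolarPairing n Θ F = 0 := by
  rw [Θ.as_sum, map_sum, LinearMap.sum_apply]
  refine Finset.sum_eq_zero fun e he => ?_
  have hFe : coeff e F = 0 := by
    by_contra h
    exact hkm ((hΘ (mem_support_iff.1 he)).symm.trans (hF h))
  rw [← mul_one (coeff e Θ), ← smul_eq_mul, ← smul_monomial, map_smul, LinearMap.smul_apply,
    apolarPairing_monomial, hFe, mul_zero, smul_zero]

lemma eq_zero_of_apolarPairing_eq_zero {F : MvPolynomial (Fin n) ℂ} {k : ℕ}
    (hF : F.IsHomogeneous k)
    (h : ∀ Θ : MvPolynomial (Fin n) ℂ, Θ.IsHomogeneous k → apolarPairing n Θ F = 0) : F = 0 := by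
  ext e
  by_contra hFe
  have hΘ : (monomial e (1 : ℂ)).IsHomogeneous k :=
    isHomogeneous_monomial _ (by rw [Finsupp.degree_eq_weight_one]; exact hF hFe)
  have := h _ hΘ
  rw [apolarPairing_monomial] at this
  exact mul_ne_zero (prod_factorial_ne_zero e) hFe this

/-- The coefficient of `x^a` in `Θ ⌟ F` is, up to `a!`, the pairing of `α^a Θ` with `F`. -/
lemma degree_add_eq_of_coeff_contract_ne_zero {Θ F : MvPolynomial (Fin n) ℂ} {k m : ℕ}
    (hΘ : Θ.IsHomogeneous k) (hF : F.IsHomogeneous m) {a : Fin n →₀ ℕ}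
    (ha : coeff a (contract Θ F) ≠ 0) : a.degree + k = m := by
  by_contra hne
  have hmul : (monomial a (1 : ℂ) * Θ).IsHomogeneous (a.degree + k) :=
    (isHomogeneous_monomial _ rfl).mul hΘ
  have := apolarPairing_eq_zero_of_ne hmul hF hne
  rw [apolarPairing_apply, mul_contract, ← apolarPairing_apply, apolarPairing_monomial] at this
  exact mul_ne_zero (prod_factorial_ne_zero a) ha this

lemma isHomogeneous_contract {Θ F : MvPolynomial (Fin n) ℂ} {k m : ℕ}
    (hΘ : Θ.IsHomogeneous k) (hF : F.IsHomogeneous m) : (contract Θ F).IsHomogeneous (m - k) := by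
  intro a ha
  have := degree_add_eq_of_coeff_contract_ne_zero hΘ hF ha
  rw [Finsupp.degree_eq_weight_one, ← Pi.one_def] at this
  omega

lemma contract_eq_zero_of_lt {Θ F : MvPolynomial (Fin n) ℂ} {k m : ℕ}
    (hΘ : Θ.IsHomogeneous k) (hF : F.IsHomogeneous m) (hmk : m < k) : contract Θ F = 0 := by
  ext a
  by_contra ha
  have := degree_add_eq_of_coeff_contract_ne_zero hΘ hF ha
  omega

lemma contract_eq_C_apolarPairing {Θ F : MvPolynomial (Fin n) ℂ} {k : ℕ}
    (hΘ : Θ.IsHomogeneous k) (hF : F.IsHomogeneous k) :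
    contract Θ F = C (apolarPairing n Θ F) :=
  IsHomogeneous.eq_C_coeff_zero (by simpa using isHomogeneous_contract hΘ hF)

lemma exists_isHomogeneous_apolarPairing_eq (k : ℕ) (f : MvPolynomial (Fin n) ℂ →ₗ[ℂ] ℂ) :
    ∃ G : MvPolynomial (Fin n) ℂ, G.IsHomogeneous k ∧
      ∀ Θ, Θ.IsHomogeneous k → apolarPairing n Θ G = f Θ := by
  let V := homogeneousSubmodule (Fin n) ℂ k
  let toDual : V →ₗ[ℂ] Module.Dual ℂ V := ((apolarPairing n).compl₁₂ V.subtype V.subtype).flip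
  have hinj : Function.Injective toDual := by
    rw [← LinearMap.ker_eq_bot, LinearMap.ker_eq_bot']
    intro G hG
    exact Subtype.ext <| eq_zero_of_apolarPairing_eq_zero G.2 fun Θ hΘ =>
      LinearMap.congr_fun hG ⟨Θ, hΘ⟩
  obtain ⟨G, hG⟩ := (LinearMap.injective_iff_surjective_of_finrank_eq_finrank
    (Subspace.dual_finrank_eq (K := ℂ) (V := V)).symm).1 hinj (f.comp V.subtype)
  exact ⟨G, G.2, fun Θ hΘ => LinearMap.congr_fun hG ⟨Θ, hΘ⟩⟩

lemma exists_eq_smul_of_apolarPairing_eq_zero {F P : MvPolynomial (Fin n) ℂ} {k : ℕ}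
    (hF : F.IsHomogeneous k) (hP : P.IsHomogeneous k)
    (h : ∀ Θ, Θ.IsHomogeneous k → apolarPairing n Θ F = 0 → apolarPairing n Θ P = 0) :
    ∃ c : ℂ, P = c • F := by
  let V := homogeneousSubmodule (Fin n) ℂ k
  have hker : ⨅ _ : Unit, LinearMap.ker ((apolarPairing n).flip F ∘ₗ V.subtype) ≤
      LinearMap.ker ((apolarPairing n).flip P ∘ₗ V.subtype) := fun Θ hΘ =>
    h Θ Θ.2 (by simpa using hΘ)
  obtain ⟨c, hc⟩ := Submodule.mem_span_singleton.1 (by simpa using mem_span_of_iInf_ker_le_ker hker)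
  refine ⟨c, sub_eq_zero.1 <| eq_zero_of_apolarPairing_eq_zero (V.sub_mem hP (V.smul_mem c hF))
    fun Θ hΘ => ?_⟩
  have hcΘ := LinearMap.congr_fun hc ⟨Θ, hΘ⟩
  simp only [LinearMap.smul_apply, LinearMap.coe_comp, Function.comp_apply,
    Submodule.subtype_apply, LinearMap.flip_apply, smul_eq_mul] at hcΘ
  simp [hcΘ]

end ApolarPairing

section MinimalGenerators

variable {n : ℕ}

lemma mul_X_mem_apolarIdeal {F G h : MvPolynomial (Fin n) ℂ} {i : Fin n} {c : ℂ}
    (hG : pderiv i G = c • F) (hh : h ∈ apolarIdeal F) : h * X i ∈ apolarIdeal G := by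
  rw [mem_apolarIdeal, mul_X_contract, hG, contract_smul, mem_apolarIdeal.1 hh, smul_zero]

lemma irrIdeal_mul_apolarIdeal_le {F G : MvPolynomial (Fin n) ℂ}
    (hG : ∀ i, ∃ c : ℂ, pderiv i G = c • F) : irrIdeal n * apolarIdeal F ≤ apolarIdeal G := by
  refine Ideal.mul_le.2 fun β hβ h hh => ?_
  have hle : irrIdeal n ≤ (apolarIdeal G).colon {h} := Ideal.span_le.2 <| by
    rintro _ ⟨i, rfl⟩
    obtain ⟨c, hc⟩ := hG i
    simpa [mul_comm] using mul_X_mem_apolarIdeal hc hh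
  simpa using hle hβ

lemma hasMinGenOfDegree_succ_of_pderiv_eq_smul {F G : MvPolynomial (Fin n) ℂ} {d : ℕ}
    (hF : F.IsHomogeneous d) (hG : G.IsHomogeneous (d + 1)) (hG0 : G ≠ 0)
    (hgrad : ∀ i, ∃ c : ℂ, pderiv i G = c • F) : HasMinGenOfDegree (apolarIdeal F) (d + 1) := by
  obtain ⟨Θ, hΘ, hΘG⟩ : ∃ Θ, Θ.IsHomogeneous (d + 1) ∧ apolarPairing n Θ G ≠ 0 := by
    by_contra! h
    exact hG0 (eq_zero_of_apolarPairing_eq_zero hG h)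
  refine ⟨Θ, contract_eq_zero_of_lt hΘ hF d.lt_succ_self, hΘ, fun hmem => hΘG ?_⟩
  rw [apolarPairing_apply, mem_apolarIdeal.1 (irrIdeal_mul_apolarIdeal_le hgrad hmem), coeff_zero]

lemma exists_pderiv_eq_smul_of_hasMinGenOfDegree_succ {F : MvPolynomial (Fin n) ℂ} {d : ℕ}
    (hF : F.IsHomogeneous d) (hmin : HasMinGenOfDegree (apolarIdeal F) (d + 1)) :
    ∃ G : MvPolynomial (Fin n) ℂ, G.IsHomogeneous (d + 1) ∧ G ≠ 0 ∧
      ∀ i, ∃ c : ℂ, pderiv i G = c • F := by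
  obtain ⟨Θ₀, -, hΘ₀, hΘ₀m⟩ := hmin
  let W := Submodule.span ℂ
    {Ψ | ∃ i h, h ∈ apolarIdeal F ∧ h.IsHomogeneous d ∧ Ψ = h * X i}
  have hW : Θ₀ ∉ W := by
    refine fun hmem => hΘ₀m (Submodule.span_le (p := (irrIdeal n * apolarIdeal F).restrictScalars ℂ)
      |>.2 ?_ hmem)
    rintro _ ⟨i, h, hh, -, rfl⟩
    exact mul_comm (X i) h ▸ Ideal.mul_mem_mul (Ideal.subset_span ⟨i, rfl⟩) hh
  obtain ⟨f, hfΘ₀, hfW⟩ := Submodule.exists_dual_map_eq_bot_of_notMem hW inferInstance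
  obtain ⟨G, hG, hGf⟩ := exists_isHomogeneous_apolarPairing_eq (d + 1) f
  refine ⟨G, hG, ?_, fun i => exists_eq_smul_of_apolarPairing_eq_zero hF
    (by simpa using hG.pderiv (i := i)) fun h hh hhF => ?_⟩
  · rintro rfl
    exact hfΘ₀ (by rw [← hGf Θ₀ hΘ₀, map_zero])
  · have hmem : h ∈ apolarIdeal F := by
      rw [mem_apolarIdeal, contract_eq_C_apolarPairing hh hF, hhF, map_zero]
    have hhX : h * X i ∈ W := Submodule.subset_span ⟨i, h, hmem, hh, rfl⟩
    rw [apolarPairing_apply, ← mul_X_contract, ← apolarPairing_apply,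
      hGf _ (hh.mul (isHomogeneous_X ℂ i))]
    simpa [hfW] using Submodule.mem_map_of_mem (f := f) hhX

theorem hasMinGenOfDegree_succ_iff {F : MvPolynomial (Fin n) ℂ} {d : ℕ}
    (hF : F.IsHomogeneous d) :
    HasMinGenOfDegree (apolarIdeal F) (d + 1) ↔ ∃ G : MvPolynomial (Fin n) ℂ,
      G.IsHomogeneous (d + 1) ∧ G ≠ 0 ∧ ∀ i, ∃ c : ℂ, pderiv i G = c • F :=
  ⟨exists_pderiv_eq_smul_of_hasMinGenOfDegree_succ hF, fun ⟨_, hG, hG0, hgrad⟩ =>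
    hasMinGenOfDegree_succ_of_pderiv_eq_smul hF hG hG0 hgrad⟩

end MinimalGenerators

section RankOne

variable {n : ℕ}

lemma pderiv_sum_smul_X (a : Fin n → ℂ) (i : Fin n) :
    pderiv i (∑ j, a j • X j : MvPolynomial (Fin n) ℂ) = C (a i) := by
  classical
  simp [pderiv_X, Pi.single_apply, smul_eq_C_mul]

lemma isHomogeneous_sum_smul_X (a : Fin n → ℂ) :
    (∑ j, a j • X j : MvPolynomial (Fin n) ℂ).IsHomogeneous 1 :=
  IsHomogeneous.sum _ _ _ fun j _ =>
    (homogeneousSubmodule (Fin n) ℂ 1).smul_mem _ (isHomogeneous_X ℂ j)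

lemma sum_X_mul_pderiv_eq_mul {G P : MvPolynomial (Fin n) ℂ} {a : Fin n → ℂ}
    (h : ∀ j, pderiv j G = a j • P) : ∑ j, X j * pderiv j G = (∑ j, a j • X j) * P := by
  simp [h, Finset.sum_mul]

lemma eq_smul_pow_of_pderiv_eq_smul {G P : MvPolynomial (Fin n) ℂ} {e : ℕ}
    (hG : G.IsHomogeneous e) (a : Fin n → ℂ) (h : ∀ j, pderiv j G = a j • P) :
    ∃ c : ℂ, G = c • (∑ j, a j • X j) ^ e := by
  induction e generalizing G P with
  | zero => exact ⟨coeff 0 G, by rw [pow_zero, smul_eq_C_mul, mul_one]; exact hG.eq_C_coeff_zero⟩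
  | succ e ih =>
    set ℓ : MvPolynomial (Fin n) ℂ := ∑ j, a j • X j
    have hEuler : ((e + 1 : ℕ) : ℂ) • G = ℓ * P := by
      rw [Nat.cast_smul_eq_nsmul, ← hG.sum_X_mul_pderiv, sum_X_mul_pderiv_eq_mul h]
    by_cases ha : a = 0
    · refine ⟨0, ?_⟩
      have hℓ : ℓ = 0 := by simp [ℓ, ha]
      rw [hℓ, zero_mul, smul_eq_zero] at hEuler
      simpa using hEuler.resolve_left (Nat.cast_ne_zero.2 e.succ_ne_zero)
    obtain ⟨i, hi : a i ≠ 0⟩ := Function.ne_iff.1 ha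
    have hQ : ∀ j, pderiv j (pderiv i G) = a j • pderiv i P := fun j => by
      rw [pderiv_pderiv_comm, h, (pderiv i).map_smul]
    obtain ⟨c, hc⟩ := ih (by simpa using hG.pderiv (i := i)) hQ
    rw [h] at hc
    have hscaled : (((e + 1 : ℕ) : ℂ) * a i) • G = c • ℓ ^ (e + 1) := by
      rw [mul_comm, mul_smul, hEuler, ← mul_smul_comm, hc, mul_smul_comm, pow_succ']
    refine ⟨(((e + 1 : ℕ) : ℂ) * a i)⁻¹ * c, ?_⟩
    rw [mul_smul, ← hscaled, inv_smul_smul₀ (mul_ne_zero (Nat.cast_ne_zero.2 e.succ_ne_zero) hi)]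

lemma exists_eq_smul_pow_of_pderiv_eq_smul {F G : MvPolynomial (Fin n) ℂ} {d : ℕ}
    (hG : G.IsHomogeneous (d + 1)) (hG0 : G ≠ 0) (hgrad : ∀ i, ∃ c : ℂ, pderiv i G = c • F) :
    ∃ (c : ℂ) (ℓ : MvPolynomial (Fin n) ℂ),
      c ≠ 0 ∧ ℓ.IsHomogeneous 1 ∧ ℓ ≠ 0 ∧ F = c • ℓ ^ d := by
  choose a ha using hgrad
  obtain ⟨c, hc⟩ := eq_smul_pow_of_pderiv_eq_smul hG a ha
  set ℓ : MvPolynomial (Fin n) ℂ := ∑ j, a j • X j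
  have hc0 : c ≠ 0 := by
    rintro rfl
    exact hG0 (by simpa using hc)
  have hℓ0 : ℓ ≠ 0 := by
    intro hℓ
    exact hG0 (by simp [hc, hℓ])
  obtain ⟨i, hi⟩ : ∃ i, a i ≠ 0 := by
    by_contra! h
    exact hℓ0 (by simp [ℓ, h])
  refine ⟨c * (d + 1), ℓ, mul_ne_zero hc0 (Nat.cast_add_one_ne_zero d),
    isHomogeneous_sum_smul_X a, hℓ0, smul_right_injective _ hi ?_⟩
  dsimp only
  rw [← ha i, hc, (pderiv i).map_smul, pderiv_pow, pderiv_sum_smul_X, add_tsub_cancel_right]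
  simp only [smul_eq_C_mul, map_mul, map_add, map_natCast, map_one, Nat.cast_add, Nat.cast_one]
  ring

lemma pderiv_pow_succ_eq_smul {ℓ : MvPolynomial (Fin n) ℂ} (hℓ : ℓ.IsHomogeneous 1) {c : ℂ}
    (hc : c ≠ 0) (d : ℕ) (i : Fin n) : ∃ b : ℂ, pderiv i (ℓ ^ (d + 1)) = b • (c • ℓ ^ d) := by
  obtain ⟨k, hk⟩ : ∃ k : ℂ, pderiv i ℓ = C k := ⟨_, (hℓ.pderiv (i := i)).eq_C_coeff_zero⟩
  refine ⟨(d + 1) * k * c⁻¹, ?_⟩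
  rw [smul_smul, inv_mul_cancel_right₀ hc, pderiv_pow, hk, add_tsub_cancel_right]
  simp only [smul_eq_C_mul, map_mul, map_add, map_natCast, map_one, Nat.cast_add, Nat.cast_one]
  ring

end RankOne

theorem apolar_generator_degree_succ_iff_rank_one_general
    (n d : ℕ) (F : MvPolynomial (Fin n) ℂ) (hF : F.IsHomogeneous d) :
    HasMinGenOfDegree (apolarIdeal F) (d + 1) ↔
    ∃ (c : ℂ) (ℓ : MvPolynomial (Fin n) ℂ),
      c ≠ 0 ∧ ℓ.IsHomogeneous 1 ∧ ℓ ≠ 0 ∧ F = c • ℓ ^ d := by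
  rw [hasMinGenOfDegree_succ_iff hF]
  constructor
  · rintro ⟨G, hG, hG0, hgrad⟩
    exact exists_eq_smul_pow_of_pderiv_eq_smul hG hG0 hgrad
  · rintro ⟨c, ℓ, hc, hℓ, hℓ0, rfl⟩
    exact ⟨ℓ ^ (d + 1), by simpa using hℓ.pow (d + 1), pow_ne_zero _ hℓ0,
      pderiv_pow_succ_eq_smul hℓ hc d⟩

/-- For a homogeneous form `F` of degree `d ≥ 1`, the apolar ideal `F^⊥`
has a minimal generator of degree `d + 1` if and only if `F = c • ℓ^d` for a nonzero scalar
`c` and a nonzero linear form `ℓ`, i.e. iff `F` has Waring rank 1. -/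
theorem apolar_generator_degree_succ_iff_rank_one
    (n d : ℕ) (hd : 1 ≤ d) (F : MvPolynomial (Fin n) ℂ) (hF : F.IsHomogeneous d) :
    HasMinGenOfDegree (apolarIdeal F) (d + 1) ↔
    ∃ (c : ℂ) (ℓ : MvPolynomial (Fin n) ℂ),
      c ≠ 0 ∧ ℓ.IsHomogeneous 1 ∧ ℓ ≠ 0 ∧ F = c • ℓ ^ d :=
  apolar_generator_degree_succ_iff_rank_one_general n d F hF
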